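/- Let u be a uniformly recurrent infinite word and w a weak bispecial factor of u such that there is a unique letter a ∈ E_ℓ(w) with the property that more than one return word of w starts with a letter in E_r(aw). Then #R(aw) < #R(w). -/

import Mathlib

variable {A : Type*}

/-- The factor of `u` of length `n` starting at position `j`. -/
def factorAt (u : ℕ → A) (j n : ℕ) : List A :=
  (List.range n).map (fun i => u (j + i))

/-- `j` is an occurrence of the finite word `w` in `u`. -/
def OccursAt (u : ℕ → A) (w : List A) (j : ℕ) : Prop :=
  factorAt u j w.length = w

/-- `w` is a factor of the infinite word `u`. -/
def IsFactor (u : ℕ → A) (w : List A) : Prop :=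
  ∃ j, OccursAt u w j

/-- `v` is a return word of `w` in `u`: the word between two successive occurrences of `w`. -/
def IsReturnWord (u : ℕ → A) (w v : List A) : Prop :=
  ∃ j k, j < k ∧ OccursAt u w j ∧ OccursAt u w k ∧
    (∀ l, j < l → l < k → ¬ OccursAt u w l) ∧ v = factorAt u j (k - j)

/-- The set `R(w)` of return words of `w` in `u`. -/
def returnWords (u : ℕ → A) (w : List A) : Set (List A) :=
  {v | IsReturnWord u w v}

/-- Property `R_m`: every factor of `u` has exactly `m` return words. -/
def PropertyR (u : ℕ → A) (m : ℕ) : Prop :=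
  ∀ w, IsFactor u w → (returnWords u w).Finite ∧ (returnWords u w).ncard = m

/-- The set of left extensions of `w`. -/
def leftExt (u : ℕ → A) (w : List A) : Set A := {a | IsFactor u (a :: w)}

/-- The set of right extensions of `w`. -/
def rightExt (u : ℕ → A) (w : List A) : Set A := {b | IsFactor u (w ++ [b])}

def LeftSpecial (u : ℕ → A) (w : List A) : Prop := 2 ≤ (leftExt u w).ncard

def RightSpecial (u : ℕ → A) (w : List A) : Prop := 2 ≤ (rightExt u w).ncard

/-- The set of pairs `(a, b)` such that `a w b` is a factor of `u`. -/
def extPairs (u : ℕ → A) (w : List A) : Set (A × A) :=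
  {p | IsFactor u (p.1 :: (w ++ [p.2]))}

/-- The bilateral order `B(w)`. -/
noncomputable def bilateralOrder (u : ℕ → A) (w : List A) : ℤ :=
  ((extPairs u w).ncard : ℤ) - (leftExt u w).ncard - (rightExt u w).ncard + 1

/-- `w` is a weak bispecial factor of `u`. -/
def WeakBispecial (u : ℕ → A) (w : List A) : Prop :=
  IsFactor u w ∧ bilateralOrder u w < 0

/-- The factor complexity of `u`. -/
noncomputable def Complexity (u : ℕ → A) (n : ℕ) : ℕ :=
  {w : List A | w.length = n ∧ IsFactor u w}.ncard

/-- `u` is recurrent: every factor occurs at least twice. -/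
def Recurrent (u : ℕ → A) : Prop :=
  ∀ w, IsFactor u w → ∃ j k, j < k ∧ OccursAt u w j ∧ OccursAt u w k

/-- `u` is uniformly recurrent. -/
def UniformlyRecurrent (u : ℕ → A) : Prop :=
  ∀ n : ℕ, ∃ N : ℕ, ∀ w, IsFactor u w → w.length = N →
    ∀ v, IsFactor u v → v.length = n → v <:+: w

def EventuallyPeriodic (u : ℕ → A) : Prop :=
  ∃ p, 0 < p ∧ ∃ N, ∀ n, N ≤ n → u (n + p) = u n

/-- `w` is a maximal right special factor. -/
def MaximalRightSpecial (u : ℕ → A) (w : List A) : Prop :=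
  IsFactor u w ∧ RightSpecial u w ∧
    ∀ v, IsFactor u v → RightSpecial u v → w <:+ v → v = w

/-- The return word `v` of `w` starts with the letter `b`. -/
def StartsWithLetter (w v : List A) (b : A) : Prop := (w ++ [b]) <+: (v ++ w)

/-!
A return word `r` of `aw`, read from an occurrence of `aw` at `j`, is the letter `a` followed by
the stretch of `u` from the occurrence of `w` at `j + 1` to the next occurrence of `aw`. That
stretch is a concatenation of return words of `w`; whenever one of them is followed by a letter
`a' ≠ a`, the next one lies in the at most one-element set of return words starting with a letter
of `E_r(a'w)`, so the whole stretch is determined by its first return word, which starts with a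
letter of `E_r(aw)`. This injects `R(aw)` into those return words of `w`. Since `B(w) < 0`, some
right extension of `w` is not one of `aw`, and a return word of `w` starting with it is missed.
-/

lemma ncard_le_ncard_of_rel {α β : Type*} {s : Set α} {t : Set β} (R : α → β → Prop)
    (ht : t.Finite) (hR : ∀ x ∈ s, ∃ y ∈ t, R x y)
    (hinj : ∀ x ∈ s, ∀ x' ∈ s, ∀ y, R x y → R x' y → x = x') :
    s.ncard ≤ t.ncard := by
  obtain rfl | ⟨x₀, hx₀⟩ := s.eq_empty_or_nonempty
  · simp
  have : Nonempty β := ⟨(hR x₀ hx₀).choose⟩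
  choose! f hft hf using hR
  exact Set.ncard_le_ncard_of_injOn f hft
    (fun x hx x' hx' hxx' => hinj x hx x' hx' (f x) (hf x hx) (hxx' ▸ hf x' hx')) ht

section Factors

variable {u : ℕ → A}

lemma factorAt_length (u : ℕ → A) (j n : ℕ) : (factorAt u j n).length = n := by
  simp [factorAt]

lemma factorAt_add (u : ℕ → A) (j m n : ℕ) :
    factorAt u j (m + n) = factorAt u j m ++ factorAt u (j + m) n := by
  simp only [factorAt, List.range_add, List.map_append, List.map_map]
  congr 1
  simp [Function.comp, Nat.add_assoc]

lemma factorAt_one (u : ℕ → A) (j : ℕ) : factorAt u j 1 = [u j] := by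
  simp [factorAt]

lemma factorAt_succ (u : ℕ → A) (j n : ℕ) :
    factorAt u j (n + 1) = factorAt u j n ++ [u (j + n)] := by
  rw [factorAt_add, factorAt_one]

lemma factorAt_succ' (u : ℕ → A) (j n : ℕ) :
    factorAt u j (n + 1) = u j :: factorAt u (j + 1) n := by
  rw [Nat.add_comm n 1, factorAt_add, factorAt_one]
  rfl

lemma factorAt_sub_append {p n m : ℕ} (hpn : p ≤ n) (hnm : n ≤ m) :
    factorAt u p (m - p) = factorAt u p (n - p) ++ factorAt u n (m - n) := by
  rw [show m - p = (n - p) + (m - n) by omega, factorAt_add, Nat.add_sub_cancel' hpn]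

lemma factorAt_prefix (u : ℕ → A) (j : ℕ) {m n : ℕ} (h : m ≤ n) :
    factorAt u j m <+: factorAt u j n :=
  ⟨factorAt u (j + m) (n - m), by rw [← factorAt_add, Nat.add_sub_cancel' h]⟩

lemma occursAt_factorAt (u : ℕ → A) (j n : ℕ) : OccursAt u (factorAt u j n) j :=
  congrArg (factorAt u j) (factorAt_length u j n)

lemma occursAt_append {x y : List A} {j : ℕ} :
    OccursAt u (x ++ y) j ↔ OccursAt u x j ∧ OccursAt u y (j + x.length) := by
  unfold OccursAt
  rw [List.length_append, factorAt_add]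
  refine ⟨fun h => List.append_inj h (factorAt_length u j x.length), ?_⟩
  rintro ⟨h1, h2⟩
  rw [h1, h2]

lemma occursAt_singleton {b : A} {j : ℕ} : OccursAt u [b] j ↔ u j = b := by
  simp [OccursAt, factorAt_one]

lemma occursAt_cons {x : A} {z : List A} {j : ℕ} :
    OccursAt u (x :: z) j ↔ u j = x ∧ OccursAt u z (j + 1) :=
  occursAt_append (x := [x]).trans (and_congr_left' occursAt_singleton)

lemma occursAt_cons_pred {w : List A} {n : ℕ} (hn : 0 < n) (h : OccursAt u w n) :
    OccursAt u (u (n - 1) :: w) (n - 1) :=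
  occursAt_cons.2 ⟨rfl, by rwa [Nat.sub_add_cancel hn]⟩

lemma mem_rightExt_of_occursAt {x : List A} {j : ℕ} (h : OccursAt u x j) :
    u (j + x.length) ∈ rightExt u x :=
  ⟨j, occursAt_append.2 ⟨h, occursAt_singleton.2 rfl⟩⟩

end Factors

section Occurrences

variable {u : ℕ → A} {w : List A}

def IsFirstOccFrom (u : ℕ → A) (w : List A) (p k : ℕ) : Prop :=
  p ≤ k ∧ OccursAt u w k ∧ ∀ l, p ≤ l → l < k → ¬ OccursAt u w l

lemma IsFirstOccFrom.unique {p k k' : ℕ} (h : IsFirstOccFrom u w p k)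
    (h' : IsFirstOccFrom u w p k') : k = k' := by
  rcases lt_trichotomy k k' with hlt | heq | hgt
  · exact absurd h.2.1 (h'.2.2 k h.1 hlt)
  · exact heq
  · exact absurd h'.2.1 (h.2.2 k' h'.1 hgt)

lemma IsFirstOccFrom.mono {p q k : ℕ} (h : IsFirstOccFrom u w p k) (hpq : p ≤ q)
    (hqk : q ≤ k) : IsFirstOccFrom u w q k :=
  ⟨hqk, h.2.1, fun l hql hlk => h.2.2 l (hpq.trans hql) hlk⟩

lemma exists_isFirstOccFrom_of_occursAt {p l : ℕ} (hpl : p ≤ l) (hl : OccursAt u w l) :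
    ∃ k, IsFirstOccFrom u w p k := by
  classical
  have hex : ∃ k, p ≤ k ∧ OccursAt u w k := ⟨l, hpl, hl⟩
  exact ⟨Nat.find hex, (Nat.find_spec hex).1, (Nat.find_spec hex).2,
    fun m hpm hm hocc => Nat.find_min hex hm ⟨hpm, hocc⟩⟩

lemma UniformlyRecurrent.exists_occursAt_mem_Icc (hur : UniformlyRecurrent u)
    (hw : IsFactor u w) : ∃ N, ∀ p, ∃ l ∈ Set.Icc p (p + N), OccursAt u w l := by
  obtain ⟨N, hN⟩ := hur w.length
  refine ⟨N, fun p => ?_⟩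
  obtain ⟨s, t, hst⟩ := hN _ ⟨p, occursAt_factorAt u p N⟩ (factorAt_length u p N) w hw rfl
  have hocc : OccursAt u (s ++ (w ++ t)) p := by
    rw [← List.append_assoc, hst]
    exact occursAt_factorAt u p N
  have hlen : s.length + w.length + t.length = N := by
    simpa [factorAt_length, Nat.add_assoc] using congrArg List.length hst
  exact ⟨p + s.length, ⟨by omega, by omega⟩,
    (occursAt_append.1 (occursAt_append.1 hocc).2).1⟩

lemma UniformlyRecurrent.exists_isFirstOccFrom (hur : UniformlyRecurrent u) (hw : IsFactor u w)
    (p : ℕ) : ∃ k, IsFirstOccFrom u w p k := by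
  obtain ⟨N, hN⟩ := hur.exists_occursAt_mem_Icc hw
  obtain ⟨l, hl, hocc⟩ := hN p
  exact exists_isFirstOccFrom_of_occursAt hl.1 hocc

lemma isReturnWord_iff {v : List A} : IsReturnWord u w v ↔
    ∃ j k, OccursAt u w j ∧ IsFirstOccFrom u w (j + 1) k ∧ v = factorAt u j (k - j) :=
  ⟨fun ⟨j, k, hjk, hj, hk, hbet, hv⟩ => ⟨j, k, hj, ⟨hjk, hk, hbet⟩, hv⟩,
    fun ⟨j, k, hj, ⟨hjk, hk, hbet⟩, hv⟩ => ⟨j, k, hjk, hj, hk, hbet, hv⟩⟩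

lemma returnWords_finite [Finite A] (hur : UniformlyRecurrent u) (hw : IsFactor u w) :
    (returnWords u w).Finite := by
  obtain ⟨N, hN⟩ := hur.exists_occursAt_mem_Icc hw
  refine (List.finite_length_le A (N + 1)).subset ?_
  rintro v ⟨j, k, hjk, -, -, hbet, rfl⟩
  obtain ⟨l, ⟨hjl, hlN⟩, hocc⟩ := hN (j + 1)
  have hkl : k ≤ l := by
    by_contra! hlk
    exact hbet l (by omega) hlk hocc
  simp only [Set.mem_ofPred_eq, factorAt_length]
  omega

end Occurrences

section StartingLetters

variable {u : ℕ → A} {w : List A}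

def returnWordsStartingIn (u : ℕ → A) (w : List A) (B : Set A) : Set (List A) :=
  {v ∈ returnWords u w | ∃ b ∈ B, StartsWithLetter w v b}

lemma startsWithLetter_factorAt {j k : ℕ} (hjk : j < k) (hj : OccursAt u w j)
    (hk : OccursAt u w k) : StartsWithLetter w (factorAt u j (k - j)) (u (j + w.length)) := by
  have hret : factorAt u j (k - j) ++ w = factorAt u j (k - j + w.length) := by
    rw [factorAt_add, Nat.add_sub_cancel' hjk.le, hk]
  have hstart : w ++ [u (j + w.length)] = factorAt u j (w.length + 1) := by
    rw [factorAt_succ, hj]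
  unfold StartsWithLetter
  rw [hret, hstart]
  exact factorAt_prefix u j (by omega)

lemma StartsWithLetter.unique {v : List A} {b b' : A} (h : StartsWithLetter w v b)
    (h' : StartsWithLetter w v b') : b = b' := by
  have heq : w ++ [b] = w ++ [b'] := by
    rcases List.prefix_or_prefix_of_prefix h h' with h1 | h1
    · exact h1.eq_of_length (by simp)
    · exact (h1.eq_of_length (by simp)).symm
  simpa using heq

lemma factorAt_mem_returnWordsStartingIn {B : Set A} {j k : ℕ} (hj : OccursAt u w j)
    (hk : IsFirstOccFrom u w (j + 1) k) (hB : u (j + w.length) ∈ B) :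
    factorAt u j (k - j) ∈ returnWordsStartingIn u w B :=
  ⟨isReturnWord_iff.2 ⟨j, k, hj, hk, rfl⟩, _, hB, startsWithLetter_factorAt hk.1 hj hk.2.1⟩

lemma returnWordsStartingIn_ssubset (hur : UniformlyRecurrent u) {B : Set A} {b : A}
    (hb : b ∈ rightExt u w) (hbB : b ∉ B) :
    returnWordsStartingIn u w B ⊂ returnWords u w := by
  obtain ⟨j, hj⟩ := hb
  obtain ⟨hwj, hbj⟩ := occursAt_append.1 hj
  obtain ⟨k, hk⟩ := hur.exists_isFirstOccFrom ⟨j, hwj⟩ (j + 1)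
  refine (Set.sep_subset _ _).ssubset_of_mem_notMem (isReturnWord_iff.2 ⟨j, k, hwj, hk, rfl⟩) ?_
  rintro ⟨-, b', hb'B, hb'⟩
  rw [hb'.unique (startsWithLetter_factorAt hk.1 hwj hk.2.1), occursAt_singleton.1 hbj] at hb'B
  exact hbB hb'B

end StartingLetters

section BilateralOrder

variable [Finite A] (u : ℕ → A)

lemma ncard_rightExt_cons_le_add_bilateralOrder (w : List A) (a : A) :
    ((rightExt u (a :: w)).ncard : ℤ) ≤ (rightExt u w).ncard + bilateralOrder u w := by
  unfold bilateralOrder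
  set P := extPairs u w
  set Pa := {p : A × A | p.1 = a}
  have hPa : P ∩ Pa = Prod.mk a '' rightExt u (a :: w) := by
    ext ⟨a', b⟩
    constructor
    · rintro ⟨hab, rfl : a' = a⟩
      exact ⟨b, hab, rfl⟩
    · rintro ⟨b, hb, ⟨⟩⟩
      exact ⟨hb, rfl⟩
  have hrest : leftExt u w \ {a} ⊆ Prod.fst '' (P \ Pa) := by
    rintro a' ⟨⟨j, hj⟩, hne⟩
    exact ⟨(a', u (j + (a' :: w).length)), ⟨mem_rightExt_of_occursAt hj, hne⟩, rfl⟩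
  have hleft : (leftExt u w).ncard - 1 ≤ (P \ Pa).ncard := calc
    _ ≤ (leftExt u w \ {a}).ncard := Set.pred_ncard_le_ncard_sdiff_singleton _ _
    _ ≤ (Prod.fst '' (P \ Pa)).ncard := Set.ncard_le_ncard hrest
    _ ≤ (P \ Pa).ncard := Set.ncard_image_le
  have hright : (rightExt u (a :: w)).ncard = (P ∩ Pa).ncard := by
    rw [hPa, Set.ncard_image_of_injective _ (Prod.mk_right_injective a)]
  have hsplit := Set.ncard_inter_add_ncard_sdiff_eq_ncard P Pa
  omega

lemma exists_mem_rightExt_notMem_rightExt_cons {w : List A} (hB : bilateralOrder u w < 0)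
    (a : A) : ∃ b ∈ rightExt u w, b ∉ rightExt u (a :: w) := by
  have := ncard_rightExt_cons_le_add_bilateralOrder u w a
  exact Set.exists_mem_notMem_of_ncard_lt_ncard (by omega)

end BilateralOrder

section FirstReturn

variable {u : ℕ → A} {a : A} {w : List A} {p n k : ℕ}

lemma IsFirstOccFrom.cons_pred (hn : IsFirstOccFrom u w (p + 1) n) (ha : u (n - 1) = a) :
    IsFirstOccFrom u (a :: w) p (n - 1) := by
  have hpn := hn.1
  refine ⟨by omega, occursAt_cons.2 ⟨ha, ?_⟩, ?_⟩
  · exact (Nat.sub_add_cancel (by omega : 1 ≤ n)).symm ▸ hn.2.1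
  · exact fun l hpl hl hocc => hn.2.2 (l + 1) (by omega) (by omega) (occursAt_cons.1 hocc).2

lemma IsFirstOccFrom.le_of_cons (hn : IsFirstOccFrom u w (p + 1) n)
    (hk : IsFirstOccFrom u (a :: w) p k) (ha : u (n - 1) ≠ a) : n ≤ k := by
  by_contra! hkn
  obtain ⟨huk, hwk⟩ := occursAt_cons.1 hk.2.1
  have hkn' : k + 1 = n := by
    by_contra hne
    exact hn.2.2 (k + 1) (by have := hk.1; omega) (by omega) hwk
  exact ha (by rwa [← hkn', Nat.add_sub_cancel])

lemma mem_rightExt_cons_pred (hn : 0 < n) (h : OccursAt u w n) :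
    u (n + w.length) ∈ rightExt u (u (n - 1) :: w) := by
  have := mem_rightExt_of_occursAt (occursAt_cons_pred hn h)
  rwa [List.length_cons, ← Nat.add_assoc, Nat.add_right_comm, Nat.sub_add_cancel hn] at this

lemma factorAt_sub_eq_append_last {j k : ℕ} (hjk : j < k) :
    factorAt u j (k - j) = factorAt u j (k - 1 - j) ++ [u (k - 1)] := by
  rw [show k - j = (k - 1 - j) + 1 by omega, factorAt_succ, show j + (k - 1 - j) = k - 1 by omega]

theorem factorAt_eq_of_firstReturn_eq
    (huniq : ∀ a' ∈ leftExt u w, a' ≠ a →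
      (returnWordsStartingIn u w (rightExt u (a' :: w))).Subsingleton)
    {p p' n n' k k' : ℕ} (hn : IsFirstOccFrom u w (p + 1) n) (hn' : IsFirstOccFrom u w (p' + 1) n')
    (hk : IsFirstOccFrom u (a :: w) p k) (hk' : IsFirstOccFrom u (a :: w) p' k')
    (hv : factorAt u p (n - p) = factorAt u p' (n' - p')) :
    factorAt u p (k + 1 - p) = factorAt u p' (k' + 1 - p') := by
  induction hd : k - p using Nat.strong_induction_on generalizing p p' n n' with
  | _ d IH =>
  have hpn := hn.1
  have hpn' := hn'.1
  have hlast : u (n - 1) = u (n' - 1) := by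
    rw [factorAt_sub_eq_append_last (by omega : p < n),
      factorAt_sub_eq_append_last (by omega : p' < n')] at hv
    simpa using (List.append_inj' hv rfl).2
  by_cases ha : u (n - 1) = a
  · rw [hk.unique (hn.cons_pred ha), hk'.unique (hn'.cons_pred (hlast ▸ ha)),
      Nat.sub_add_cancel (by omega), Nat.sub_add_cancel (by omega)]
    exact hv
  · have hnk := hn.le_of_cons hk ha
    have hnk' := hn'.le_of_cons hk' (hlast ▸ ha)
    obtain ⟨m, hm⟩ := exists_isFirstOccFrom_of_occursAt (by omega : n + 1 ≤ k + 1)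
      (occursAt_cons.1 hk.2.1).2
    obtain ⟨m', hm'⟩ := exists_isFirstOccFrom_of_occursAt (by omega : n' + 1 ≤ k' + 1)
      (occursAt_cons.1 hk'.2.1).2
    have hnext : factorAt u n (m - n) = factorAt u n' (m' - n') :=
      huniq (u (n - 1)) ⟨n - 1, occursAt_cons_pred (by omega) hn.2.1⟩ ha
        (factorAt_mem_returnWordsStartingIn hn.2.1 hm (mem_rightExt_cons_pred (by omega) hn.2.1))
        (factorAt_mem_returnWordsStartingIn hn'.2.1 hm'
          (hlast ▸ mem_rightExt_cons_pred (by omega) hn'.2.1))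
    have htail := IH (k - n) (by omega) hm hm' (hk.mono (by omega) hnk)
      (hk'.mono (by omega) hnk') hnext rfl
    rw [factorAt_sub_append (p := p) (n := n) (m := k + 1) (by omega) (by omega),
      factorAt_sub_append (p := p') (n := n') (m := k' + 1) (by omega) (by omega), hv, htail]

end FirstReturn

section Injection

variable {u : ℕ → A} {a : A} {w : List A}

lemma exists_firstReturn_of_mem_returnWords_cons {r : List A}
    (hr : r ∈ returnWords u (a :: w)) :
    ∃ p k n, IsFirstOccFrom u (a :: w) p k ∧ IsFirstOccFrom u w (p + 1) n ∧
      r = a :: factorAt u p (k - p) ∧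
      factorAt u p (n - p) ∈ returnWordsStartingIn u w (rightExt u (a :: w)) := by
  obtain ⟨j, k, hj, hk, rfl⟩ := isReturnWord_iff.1 hr
  obtain ⟨haj, hwj⟩ := occursAt_cons.1 hj
  have hjk := hk.1
  obtain ⟨n, hn⟩ := exists_isFirstOccFrom_of_occursAt (by omega : j + 1 + 1 ≤ k + 1)
    (occursAt_cons.1 hk.2.1).2
  have hb : u (j + 1 + w.length) ∈ rightExt u (a :: w) := by
    simpa [Nat.add_right_comm, Nat.add_assoc] using mem_rightExt_of_occursAt hj
  refine ⟨j + 1, k, n, hk, hn, ?_, factorAt_mem_returnWordsStartingIn hwj hn hb⟩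
  rw [show k - j = k - (j + 1) + 1 by omega, factorAt_succ', haj]

lemma ncard_returnWords_cons_le (hfin : (returnWords u w).Finite)
    (huniq : ∀ a' ∈ leftExt u w, a' ≠ a →
      (returnWordsStartingIn u w (rightExt u (a' :: w))).Subsingleton) :
    (returnWords u (a :: w)).ncard ≤
      (returnWordsStartingIn u w (rightExt u (a :: w))).ncard := by
  refine ncard_le_ncard_of_rel (fun r v => ∃ p k n,
      IsFirstOccFrom u (a :: w) p k ∧ IsFirstOccFrom u w (p + 1) n ∧
      r = a :: factorAt u p (k - p) ∧ v = factorAt u p (n - p))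
    (hfin.subset (Set.sep_subset _ _)) (fun r hr => ?_) ?_
  · obtain ⟨p, k, n, hk, hn, hr, hv⟩ := exists_firstReturn_of_mem_returnWords_cons hr
    exact ⟨_, hv, p, k, n, hk, hn, hr, rfl⟩
  · rintro r - r' - v ⟨p, k, n, hk, hn, rfl, rfl⟩ ⟨p', k', n', hk', hn', rfl, hv⟩
    have h := factorAt_eq_of_firstReturn_eq huniq hn hn' hk hk' hv
    rw [Nat.sub_add_comm hk.1, Nat.sub_add_comm hk'.1, factorAt_succ, factorAt_succ] at h
    rw [(List.append_inj' h rfl).1]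

end Injection

theorem card_returnWords_lt_of_weakBispecial_general [Fintype A] (u : ℕ → A)
    (hur : UniformlyRecurrent u) (w : List A) (hwb : WeakBispecial u w)
    (a : A)
    (huniq : ∀ a' ∈ leftExt u w, a' ≠ a →
      {v ∈ returnWords u w |
        ∃ b ∈ rightExt u (a' :: w), StartsWithLetter w v b}.ncard ≤ 1) :
    (returnWords u (a :: w)).ncard < (returnWords u w).ncard := by
  have hfin := returnWords_finite hur hwb.1
  have hsub : ∀ a' ∈ leftExt u w, a' ≠ a →
      (returnWordsStartingIn u w (rightExt u (a' :: w))).Subsingleton :=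
    fun a' ha' hne _ hx _ hy =>
      (Set.ncard_le_one_iff (hfin.subset (Set.sep_subset _ _))).1 (huniq a' ha' hne) hx hy
  obtain ⟨b, hbw, hbaw⟩ := exists_mem_rightExt_notMem_rightExt_cons u hwb.2 a
  calc (returnWords u (a :: w)).ncard
      ≤ (returnWordsStartingIn u w (rightExt u (a :: w))).ncard :=
        ncard_returnWords_cons_le hfin hsub
    _ < (returnWords u w).ncard :=
      Set.ncard_lt_ncard (returnWordsStartingIn_ssubset hur hbw hbaw) hfin

/-- Let `w` be a weak bispecial factor of a uniformly recurrent word `u`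
with a unique `a ∈ Eℓ(w)` such that more than one return word of `w` starts with a
letter in `E_r(aw)`. Then `#R(aw) < #R(w)`. -/
theorem card_returnWords_lt_of_weakBispecial [Fintype A] (u : ℕ → A)
    (hur : UniformlyRecurrent u) (w : List A) (hwb : WeakBispecial u w)
    (a : A) (ha : a ∈ leftExt u w)
    (hmany : 1 < {v ∈ returnWords u w |
      ∃ b ∈ rightExt u (a :: w), StartsWithLetter w v b}.ncard)
    (huniq : ∀ a' ∈ leftExt u w, a' ≠ a →
      {v ∈ returnWords u w |
        ∃ b ∈ rightExt u (a' :: w), StartsWithLetter w v b}.ncard ≤ 1) :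
    (returnWords u (a :: w)).ncard < (returnWords u w).ncard :=
  card_returnWords_lt_of_weakBispecial_general u hur w hwb a huniq
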